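/- For λ > 0, γ > 1, if λ < |y| < γλ, then g = (γ/(γ-1))(|y| - λ)·sign(y) minimizes the function g ↦ (1/2)(g - y)² + h_{γ,λ}(g) over ℝ. -/

import Mathlib

noncomputable def mcp (γ lam y : ℝ) : ℝ :=
  if |y| ≤ γ * lam then lam * |y| - y ^ 2 / (2 * γ) else lam ^ 2 * γ / 2

/-!
The MCP penalty dominates its quadratic branch `lam * |g| - g² / (2γ)` everywhere, with equality
for `|g| ≤ γ * lam`, and `(g - y)² ≥ (|g| - |y|)²` with equality when `g` has the sign of `y`.
So the objective is bounded below by a one-variable quadratic in `|g|` with positive leading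
coefficient `(γ - 1) / (2γ)`, whose vertex `γ / (γ - 1) * (|y| - lam)` lies in `[0, γ * lam]`;
the proposed point attains this bound there.
-/

theorem lam_mul_abs_sub_sq_le_mcp {γ : ℝ} (hγ : 0 < γ) (lam g : ℝ) :
    lam * |g| - g ^ 2 / (2 * γ) ≤ mcp γ lam g := by
  unfold mcp
  split_ifs
  · rfl
  · have key : lam ^ 2 * γ / 2 - (lam * |g| - g ^ 2 / (2 * γ)) = (|g| - γ * lam) ^ 2 / (2 * γ) := by
      rw [← sq_abs g]; field_simp; ring
    have : 0 ≤ (|g| - γ * lam) ^ 2 / (2 * γ) := by positivity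
    linarith

theorem mcp_of_abs_le {γ lam g : ℝ} (hg : |g| ≤ γ * lam) :
    mcp γ lam g = lam * |g| - g ^ 2 / (2 * γ) := if_pos hg

theorem sub_sq_half_add_quadratic_le {γ a lam b : ℝ} (hγ : 1 < γ)
    (hb : (γ - 1) * b = γ * (a - lam)) (t : ℝ) :
    (b - a) ^ 2 / 2 + (lam * b - b ^ 2 / (2 * γ)) ≤
      (t - a) ^ 2 / 2 + (lam * t - t ^ 2 / (2 * γ)) := by
  have hγ0 : γ ≠ 0 := by positivity
  have key : (t - a) ^ 2 / 2 + (lam * t - t ^ 2 / (2 * γ)) -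
      ((b - a) ^ 2 / 2 + (lam * b - b ^ 2 / (2 * γ))) = (γ - 1) / (2 * γ) * (t - b) ^ 2 := by
    field_simp
    linear_combination (2 * (t - b)) * hb
  have : 0 ≤ (γ - 1) / (2 * γ) * (t - b) ^ 2 := by
    have : 0 ≤ γ - 1 := by linarith
    positivity
  linarith

theorem Real.abs_mul_sign {y : ℝ} (hy : y ≠ 0) (c : ℝ) : |c * Real.sign y| = |c| := by
  rcases Real.sign_apply_eq_of_ne_zero y hy with h | h <;> simp [h]

theorem Real.mul_sign_sub_sq {y : ℝ} (hy : y ≠ 0) (c : ℝ) :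
    (c * Real.sign y - y) ^ 2 = (c - |y|) ^ 2 := by
  rcases hy.lt_or_gt with h | h
  · rw [Real.sign_of_neg h, abs_of_neg h]; ring
  · rw [Real.sign_of_pos h, abs_of_pos h]; ring

theorem abs_sub_abs_sq_le (g y : ℝ) : (|g| - |y|) ^ 2 ≤ (g - y) ^ 2 :=
  sq_le_sq.mpr (by simpa using abs_abs_sub_abs_le_abs_sub g y)

theorem mcp_prox_case2_general (lam γ y : ℝ) (hγ : 1 < γ)
    (hy1 : lam < |y|) (hy2 : |y| < γ * lam) :
    IsMinOn (fun g => (g - y) ^ 2 / 2 + mcp γ lam g) Set.univ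
      (γ / (γ - 1) * (|y| - lam) * Real.sign y) := by
  set b := γ / (γ - 1) * (|y| - lam) with hb
  have hγ1 : 0 < γ - 1 := by linarith
  have hy : y ≠ 0 := by rintro rfl; simp at hy1 hy2; nlinarith
  have hb_nonneg : 0 ≤ b := by
    have : 0 < |y| - lam := by linarith
    positivity
  have hb_opt : (γ - 1) * b = γ * (|y| - lam) := by rw [hb]; field_simp
  have hb_le : b ≤ γ * lam := by nlinarith
  have habs : |b * Real.sign y| = b := by rw [Real.abs_mul_sign hy, abs_of_nonneg hb_nonneg]
  intro g _
  calc (b * Real.sign y - y) ^ 2 / 2 + mcp γ lam (b * Real.sign y)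
      = (b - |y|) ^ 2 / 2 + (lam * b - b ^ 2 / (2 * γ)) := by
        rw [mcp_of_abs_le (habs.le.trans hb_le), ← sq_abs (b * Real.sign y), habs,
          Real.mul_sign_sub_sq hy]
    _ ≤ (|g| - |y|) ^ 2 / 2 + (lam * |g| - |g| ^ 2 / (2 * γ)) :=
        sub_sq_half_add_quadratic_le hγ hb_opt |g|
    _ ≤ (g - y) ^ 2 / 2 + mcp γ lam g := by
        rw [sq_abs]
        gcongr ?_ / 2 + ?_
        · exact abs_sub_abs_sq_le g y
        · exact lam_mul_abs_sub_sq_le_mcp (by linarith) lam g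

theorem mcp_prox_case2 (lam γ y : ℝ) (hlam : 0 < lam) (hγ : 1 < γ)
    (hy1 : lam < |y|) (hy2 : |y| < γ * lam) :
    IsMinOn (fun g => (g - y) ^ 2 / 2 + mcp γ lam g) Set.univ
      (γ / (γ - 1) * (|y| - lam) * Real.sign y) :=
  mcp_prox_case2_general lam γ y hγ hy1 hy2
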